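/- arXiv:2205.02813 — 4 statements merged into one kernel-verified Lean document; each statement's English description precedes it below -/
import Mathlib

section
/- For density operators ρ, σ on a finite-dimensional Hilbert space, log(1 + R(ρ)) = min_{σ∈M} D_max(ρ‖σ), where R(ρ) is the generalised robustness with respect to a closed convex set M of density operators and D_max is the max-relative entropy. -/
open scoped BigOperators ComplexOrder
noncomputable section

variable {ι : Type*} [Fintype ι] [DecidableEq ι]

/-- Density operator predicate. -/
def IsDensity (ρ : Matrix ι ι ℂ) : Prop := ρ.PosSemidef ∧ ρ.trace = 1

/-- Max-relative entropy `D_max(ρ‖σ) = log min{λ ≥ 1 : ρ ≤ λσ}` (`+∞` if infeasible). -/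
def Dmax (ρ σ : Matrix ι ι ℂ) : EReal :=
  sInf {x : EReal | ∃ l : ℝ, 1 ≤ l ∧ ((l : ℂ) • σ - ρ).PosSemidef ∧ x = (Real.log l : ℝ)}

/-- Generalised robustness with respect to a set `M` of states (`+∞` if infeasible). -/
def Rob (M : Set (Matrix ι ι ℂ)) (ρ : Matrix ι ι ℂ) : EReal :=
  sInf {x : EReal | ∃ s : ℝ, 0 ≤ s ∧
    (∃ σ, IsDensity σ ∧ (((1 + s)⁻¹ : ℂ) • (ρ + (s : ℂ) • σ)) ∈ M) ∧ x = (s : ℝ)}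

/-- The extended-real logarithm (junk off `(0,∞)`, `⊤ ↦ ⊤`). -/
def elog (x : EReal) : EReal := if x = ⊤ then ⊤ else ((Real.log x.toReal : ℝ) : EReal)

/-! A state `σ` is a mixture `(ρ + s τ) / (1 + s)` of `ρ` with some state `τ` exactly when
`ρ ≤ (1 + s) σ`, the witness being `τ = ((1 + s) σ - ρ) / s`. Hence the feasible values of
`1 + R(ρ)` and of `exp D_max(ρ‖σ)`, `σ ∈ M`, are the same numbers, and `elog (1 + ·)` turns
the infimum of the former into the infimum of the logarithms of the latter. -/

section Mixtures

variable {n : Type*}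

lemma Matrix.PosSemidef.ofReal_smul {A : Matrix n n ℂ} (hA : A.PosSemidef) {c : ℝ}
    (hc : 0 ≤ c) : ((c : ℂ) • A).PosSemidef :=
  hA.smul (Complex.zero_le_real.mpr hc)

lemma posSemidef_smul_mixture_sub {ρ τ : Matrix n n ℂ} (hτ : τ.PosSemidef) {s : ℝ}
    (hs : 0 ≤ s) :
    (((1 + s : ℝ) : ℂ) • ((1 + (s : ℂ))⁻¹ • (ρ + (s : ℂ) • τ)) - ρ).PosSemidef := by
  have h1s : (1 + (s : ℂ)) ≠ 0 := by exact_mod_cast (by linarith : (0 : ℝ) < 1 + s).ne'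
  rw [smul_smul, Complex.ofReal_add, Complex.ofReal_one, mul_inv_cancel₀ h1s, one_smul,
    add_sub_cancel_left]
  exact hτ.ofReal_smul hs

lemma exists_isDensity_mixture_eq [Fintype n] {ρ σ : Matrix n n ℂ} (hρ : ρ.trace = 1)
    (hσ : IsDensity σ) {l : ℝ} (hl : 1 ≤ l) (h : ((l : ℂ) • σ - ρ).PosSemidef) :
    ∃ τ, IsDensity τ ∧ (1 + ((l - 1 : ℝ) : ℂ))⁻¹ • (ρ + ((l - 1 : ℝ) : ℂ) • τ) = σ := by
  rcases hl.eq_or_lt with rfl | hl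
  · rw [Complex.ofReal_one, one_smul] at h
    have hσρ : σ = ρ :=
      sub_eq_zero.mp (h.trace_eq_zero_iff.mp (by simp [Matrix.trace_sub, hσ.2, hρ]))
    exact ⟨σ, hσ, by simp [hσρ]⟩
  have hs : (l - 1 : ℝ) ≠ 0 := by linarith
  refine ⟨(((l - 1)⁻¹ : ℝ) : ℂ) • ((l : ℂ) • σ - ρ), ⟨?_, ?_⟩, ?_⟩
  · exact h.ofReal_smul (inv_nonneg.mpr (by linarith))
  · rw [Matrix.trace_smul, Matrix.trace_sub, Matrix.trace_smul, hσ.2, hρ]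
    have hs' : (l : ℂ) - 1 ≠ 0 := by exact_mod_cast hs
    simp only [smul_eq_mul, mul_one]
    push_cast
    field_simp
  · rw [smul_smul, Complex.ofReal_inv, mul_inv_cancel₀ (by exact_mod_cast hs), one_smul,
      add_sub_cancel, smul_smul, Complex.ofReal_sub, Complex.ofReal_one, add_sub_cancel,
      inv_mul_cancel₀ (by exact_mod_cast (by linarith : (0 : ℝ) < l).ne'), one_smul]

end Mixtures

lemma elog_one_add_le {R : EReal} (hR : 0 ≤ R) {t : ℝ} (h : R ≤ t) :
    elog (1 + R) ≤ Real.log (1 + t) := by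
  induction R using EReal.rec with
  | bot => exact absurd hR (by simp)
  | top => exact absurd h (by simp)
  | coe r =>
    have hr : (0 : ℝ) ≤ r := by exact_mod_cast hR
    have hrt : r ≤ t := by exact_mod_cast h
    rw [← EReal.coe_one, ← EReal.coe_add, elog, if_neg (EReal.coe_ne_top _), EReal.toReal_coe]
    exact_mod_cast Real.log_le_log (by linarith) (by linarith)

lemma le_elog_one_add {R y : EReal} (hR : 0 ≤ R)
    (h : ∀ t : ℝ, R < t → y ≤ Real.log (1 + t)) : y ≤ elog (1 + R) := by
  induction R using EReal.rec with
  | bot => exact absurd hR (by simp)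
  | top =>
    rw [← EReal.coe_one, EReal.coe_add_top, elog, if_pos rfl]
    exact le_top
  | coe r =>
    have hr : (0 : ℝ) ≤ r := by exact_mod_cast hR
    rw [← EReal.coe_one, ← EReal.coe_add, elog, if_neg (EReal.coe_ne_top _), EReal.toReal_coe]
    by_contra! hy
    obtain ⟨c, hrc, hcy⟩ := EReal.exists_between_coe_real hy
    have hc : Real.log (1 + r) < c := by exact_mod_cast hrc
    have hr_lt : r < Real.exp c - 1 := by
      have := Real.exp_lt_exp.mpr hc
      rw [Real.exp_log (by linarith)] at this
      linarith
    have := h _ (by exact_mod_cast hr_lt)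
    rw [add_sub_cancel, Real.log_exp] at this
    exact (this.trans_lt hcy).false

lemma rob_nonneg {n : Type*} [Fintype n] (M : Set (Matrix n n ℂ))
    (ρ : Matrix n n ℂ) : 0 ≤ Rob M ρ :=
  le_sInf <| by
    rintro _ ⟨s, hs, -, rfl⟩
    exact_mod_cast hs

theorem log_one_add_rob_eq_min_Dmax_general (M : Set (Matrix ι ι ℂ))
    (hMd : ∀ σ ∈ M, IsDensity σ)
    (ρ : Matrix ι ι ℂ) (hρ : IsDensity ρ) :
    elog (1 + Rob M ρ) = ⨅ σ ∈ M, Dmax ρ σ := by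
  apply le_antisymm
  · refine le_iInf₂ fun σ hσM => le_sInf ?_
    rintro _ ⟨l, hl, hpsd, rfl⟩
    obtain ⟨τ, hτ, hmix⟩ := exists_isDensity_mixture_eq hρ.2 (hMd σ hσM) hl hpsd
    have hRob : Rob M ρ ≤ ((l - 1 : ℝ) : EReal) :=
      sInf_le ⟨l - 1, by linarith, ⟨τ, hτ, hmix ▸ hσM⟩, rfl⟩
    simpa using elog_one_add_le (rob_nonneg M ρ) hRob
  · refine le_elog_one_add (rob_nonneg M ρ) fun t ht => ?_
    obtain ⟨_, ⟨s, hs, ⟨τ, hτ, hmixM⟩, rfl⟩, hst_lt⟩ := sInf_lt_iff.mp ht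
    have hst : s ≤ t := by exact_mod_cast hst_lt.le
    calc ⨅ σ ∈ M, Dmax ρ σ ≤ Dmax ρ _ := iInf₂_le _ hmixM
      _ ≤ ((Real.log (1 + s) : ℝ) : EReal) :=
        sInf_le ⟨1 + s, by linarith, posSemidef_smul_mixture_sub hτ.1 hs, rfl⟩
      _ ≤ ((Real.log (1 + t) : ℝ) : EReal) := by
        exact_mod_cast Real.log_le_log (by linarith) (by linarith)

/-- For a nonempty closed convex set `M` of density operators and a
density operator `ρ`, `log(1 + R_M(ρ)) = min_{σ ∈ M} D_max(ρ‖σ)`. -/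
theorem log_one_add_rob_eq_min_Dmax (M : Set (Matrix ι ι ℂ))
    (hM : M.Nonempty) (hMd : ∀ σ ∈ M, IsDensity σ) (hMc : IsClosed M) (hMconv : Convex ℝ M)
    (ρ : Matrix ι ι ℂ) (hρ : IsDensity ρ) :
    elog (1 + Rob M ρ) = ⨅ σ ∈ M, Dmax ρ σ :=
  log_one_add_rob_eq_min_Dmax_general M hMd ρ hρ
end
end

section
/- For any ε∈[0,1) and states ρ,σ on a finite-dimensional Hilbert space, D_H^ε(ρ‖σ) ≤ D_max(ρ‖σ) + log(1/(1−ε)). -/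
/-!
If `ρ ≤ l σ`, then every test `0 ≤ M ≤ 1` with `Tr Mρ ≥ 1 - ε` has
`Tr Mσ ≥ Tr Mρ / l ≥ (1 - ε) / l`, because `Tr (lσ - ρ) M ≥ 0` for positive `lσ - ρ` and `M`.
Hence `D_H^ε ≤ log l + log (1/(1-ε))`, and taking the infimum over `l` gives the bound by `D_max`.
-/

open scoped BigOperators ComplexOrder
noncomputable section

variable {ι : Type*} [Fintype ι] [DecidableEq ι]

/-- Hypothesis testing relative entropy
`D_H^ε(ρ‖σ) = -log min{Tr Mσ : 0 ≤ M ≤ 1, Tr Mρ ≥ 1-ε}`. -/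
def DH (ε : ℝ) (ρ σ : Matrix ι ι ℂ) : ℝ :=
  - Real.log (sInf {t : ℝ | ∃ M : Matrix ι ι ℂ, M.PosSemidef ∧ (1 - M).PosSemidef ∧
      1 - ε ≤ (ρ * M).trace.re ∧ t = (σ * M).trace.re})

open Matrix

open scoped MatrixOrder in
/-- `Tr (A B) = Tr (√B A √B)`. -/
theorem Matrix.PosSemidef.trace_mul_nonneg {𝕜 n : Type*} [RCLike 𝕜] [Fintype n]
    {A B : Matrix n n 𝕜} (hA : A.PosSemidef) (hB : B.PosSemidef) : 0 ≤ (A * B).trace := by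
  classical
  have hsqrt : (CFC.sqrt B)ᴴ = CFC.sqrt B := (CFC.sqrt_nonneg B).posSemidef.isHermitian
  have hcycle : (A * B).trace = ((CFC.sqrt B)ᴴ * A * CFC.sqrt B).trace := by
    conv_lhs => rw [← CFC.sqrt_mul_sqrt_self B hB.nonneg, ← Matrix.mul_assoc, trace_mul_comm]
    rw [hsqrt, Matrix.mul_assoc]
  exact hcycle ▸ (hA.conjTranspose_mul_mul_same _).trace_nonneg

theorem trace_mul_re_le_of_posSemidef_smul_sub {n : Type*} [Fintype n]
    {ρ σ M : Matrix n n ℂ} {l : ℝ} (h : ((l : ℂ) • σ - ρ).PosSemidef) (hM : M.PosSemidef) :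
    (ρ * M).trace.re ≤ l * (σ * M).trace.re := by
  have := (Complex.le_def.mp (h.trace_mul_nonneg hM)).1
  simp only [sub_mul, smul_mul, trace_sub, trace_smul, smul_eq_mul, Complex.sub_re,
    Complex.zero_re, Complex.re_ofReal_mul] at this
  linarith

theorem DH_le_log_add_log_inv {ρ σ : Matrix ι ι ℂ} (hρ : ρ.trace = 1) {ε : ℝ} (hε0 : 0 ≤ ε)
    (hε1 : ε < 1) {l : ℝ} (hl : 0 < l) (h : ((l : ℂ) • σ - ρ).PosSemidef) :
    DH ε ρ σ ≤ Real.log l + Real.log (1 - ε)⁻¹ := by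
  set T := {t : ℝ | ∃ M : Matrix ι ι ℂ, M.PosSemidef ∧ (1 - M).PosSemidef ∧
      1 - ε ≤ (ρ * M).trace.re ∧ t = (σ * M).trace.re}
  have hT : T.Nonempty := ⟨_, 1, .one, by simpa using .zero, by simp [hρ, hε0], rfl⟩
  have hbound : ∀ t ∈ T, (1 - ε) / l ≤ t := by
    rintro _ ⟨M, hM, -, hMρ, rfl⟩
    rw [div_le_iff₀' hl]
    exact hMρ.trans (trace_mul_re_le_of_posSemidef_smul_sub h hM)
  have hε : 0 < 1 - ε := sub_pos.2 hε1
  calc DH ε ρ σ = -Real.log (sInf T) := rfl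
    _ ≤ -Real.log ((1 - ε) / l) :=
      neg_le_neg (Real.log_le_log (div_pos hε hl) (le_csInf hT hbound))
    _ = Real.log l + Real.log (1 - ε)⁻¹ := by
      rw [Real.log_div hε.ne' hl.ne', Real.log_inv]; ring

theorem DH_le_Dmax_add_general (ρ σ : Matrix ι ι ℂ)
    (hρ : IsDensity ρ) (ε : ℝ) (hε0 : 0 ≤ ε) (hε1 : ε < 1) :
    ((DH ε ρ σ : ℝ) : EReal) ≤ Dmax ρ σ + ((Real.log (1 - ε)⁻¹ : ℝ) : EReal) := by
  rw [← EReal.sub_le_iff_le_add (.inl (EReal.coe_ne_bot _)) (.inl (EReal.coe_ne_top _)),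
    ← EReal.coe_sub]
  refine le_sInf ?_
  rintro _ ⟨l, hl, h, rfl⟩
  have := DH_le_log_add_log_inv hρ.2 hε0 hε1 (one_pos.trans_le hl) h
  exact EReal.coe_le_coe_iff.2 (by linarith)

/-- For `ε ∈ [0,1)` and states `ρ, σ`,
`D_H^ε(ρ‖σ) ≤ D_max(ρ‖σ) + log(1/(1-ε))`. -/
theorem DH_le_Dmax_add (ρ σ : Matrix ι ι ℂ)
    (hρ : IsDensity ρ) (hσ : IsDensity σ) (ε : ℝ) (hε0 : 0 ≤ ε) (hε1 : ε < 1) :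
    ((DH ε ρ σ : ℝ) : EReal) ≤ Dmax ρ σ + ((Real.log (1 - ε)⁻¹ : ℝ) : EReal) :=
  DH_le_Dmax_add_general ρ σ hρ ε hε0 hε1
end
end

section
/- The measured relative entropy is always at most the Umegaki relative entropy: for any finite set of POVMs 𝔼 and any states ρ,σ, sup over POVMs (E_x)∈𝔼 of Σ_x Tr(ρE_x) log(Tr(ρE_x)/Tr(σE_x)) ≤ D(ρ‖σ). -/
open scoped BigOperators ComplexOrder
noncomputable section

variable {ι : Type*} [Fintype ι] [DecidableEq ι]

def mlog (A : Matrix ι ι ℂ) : Matrix ι ι ℂ :=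
  if h : A.IsHermitian then h.cfc Real.log else 0

def SuppLE (ρ σ : Matrix ι ι ℂ) : Prop := ∀ v, σ.mulVec v = 0 → ρ.mulVec v = 0

/-- Umegaki relative entropy, `+∞` if the support condition fails. -/
def relEnt (ρ σ : Matrix ι ι ℂ) : EReal :=
  @ite _ (SuppLE ρ σ) (Classical.propDecidable _)
    (((ρ * (mlog ρ - mlog σ)).trace.re : ℝ) : EReal) ⊤

/-- The classical relative entropy of the outcome statistics of the POVM `E`. -/
def measValue {k : ℕ} (E : Fin k → Matrix ι ι ℂ) (ρ σ : Matrix ι ι ℂ) : ℝ :=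
  ∑ x, ((ρ * E x).trace.re) * Real.log (((ρ * E x).trace.re) / ((σ * E x).trace.re))

/-!
Under the support condition both sides are classical relative entropies `∑ p log (p / q)`:
the measured one of `p x = Tr(ρ E x)`, `q x = Tr(σ E x)`, and the Umegaki one of the
Nussbaum–Szkoła distributions `P (i, j) = a i |⟪u i, v j⟫|²`, `Q (i, j) = b j |⟪u i, v j⟫|²`,
where `ρ = ∑ a i • u i u iᴴ` and `σ = ∑ b j • v j v jᴴ` are eigen-decompositions.
Since `∑ p log (p / q) = ∫₀¹ (∑ p - ∑ H_t(p, q)) / t dt` with `H_t(p, q) = p q / (t p + (1 - t) q)`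
and `∑ p = ∑ P = Tr ρ`, it suffices to show `∑ H_t(P, Q) ≤ ∑ H_t(p, q)` for `t ∈ (0, 1)`.
As `H_t(a, b) |g|² = min_y (b / t |g - y|² + a / (1 - t) |y|²)`, the left side is at most
`Tr((1 - Y) σ (1 - Y)ᴴ) / t + Tr(Y ρ Yᴴ) / (1 - t)` for every matrix `Y`. For `Y = ∑ τ x • E x`
the operator Jensen inequality `(∑ τ x • E x)² ≤ ∑ τ x ^ 2 • E x` bounds this by
`∑ ((1 - τ x)² q x / t + τ x ² p x / (1 - t))`, whose minimum over `τ` is `∑ H_t(p, q)`.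
-/

section Classical

open Set

/-- `(t / q + (1 - t) / p)⁻¹` for `p, q > 0`, extended by `0` to `p = q = 0`. -/
def weightedHarmonicMean (t p q : ℝ) : ℝ := p * q / (t * p + (1 - t) * q)

lemma weightedHarmonicMean_mul_mul (t a b w : ℝ) :
    weightedHarmonicMean t (a * w) (b * w) = w * weightedHarmonicMean t a b := by
  unfold weightedHarmonicMean
  rcases eq_or_ne w 0 with rfl | hw
  · simp
  · rw [show t * (a * w) + (1 - t) * (b * w) = (t * a + (1 - t) * b) * w by ring,
      show a * w * (b * w) = a * b * w * w by ring, mul_div_mul_right _ _ hw]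
    ring

lemma eq_zero_of_convex_comb_eq_zero {t p q : ℝ} (ht : t ∈ Ioo 0 1) (hp : 0 ≤ p) (hq : 0 ≤ q)
    (h : t * p + (1 - t) * q = 0) : p = 0 ∧ q = 0 := by
  obtain ⟨ht0, ht1⟩ := ht
  constructor <;> nlinarith [mul_nonneg ht0.le hp, mul_nonneg (sub_nonneg.2 ht1.le) hq]

lemma convex_comb_pos {t p q : ℝ} (ht : t ∈ Icc 0 1) (hp : 0 < p) (hq : 0 < q) :
    0 < t * p + (1 - t) * q := by
  obtain ⟨ht0, ht1⟩ := ht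
  rcases ht0.eq_or_lt with rfl | ht0
  · simpa using hq
  · nlinarith [mul_nonneg (sub_nonneg.2 ht1) hq.le]

lemma weightedHarmonicMean_mul_normSq_le {t a b : ℝ} (ht : t ∈ Ioo 0 1) (ha : 0 ≤ a)
    (hb : 0 ≤ b) (g y : ℂ) :
    weightedHarmonicMean t a b * Complex.normSq g ≤
      b / t * Complex.normSq (g - y) + a / (1 - t) * Complex.normSq y := by
  obtain ⟨ht0, ht1⟩ := ht
  have h1t : 0 < 1 - t := sub_pos.2 ht1
  unfold weightedHarmonicMean
  rcases (add_nonneg (mul_nonneg ht0.le ha) (mul_nonneg h1t.le hb)).eq_or_lt with hD | hD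
  · rw [← hD, div_zero, zero_mul]
    exact add_nonneg (mul_nonneg (div_nonneg hb ht0.le) (Complex.normSq_nonneg _))
      (mul_nonneg (div_nonneg ha h1t.le) (Complex.normSq_nonneg _))
  rw [div_mul_eq_mul_div, div_le_iff₀ hD, div_mul_eq_mul_div, div_mul_eq_mul_div,
    div_add_div _ _ ht0.ne' h1t.ne', div_mul_eq_mul_div, le_div_iff₀ (mul_pos ht0 h1t)]
  simp only [Complex.normSq_apply, Complex.sub_re, Complex.sub_im]
  nlinarith [sq_nonneg (b * (1 - t) * (g.re - y.re) - t * a * y.re),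
    sq_nonneg (b * (1 - t) * (g.im - y.im) - t * a * y.im)]

lemma exists_sq_mul_div_add_sq_mul_div_eq_weightedHarmonicMean {t p q : ℝ} (ht : t ∈ Ioo 0 1)
    (hp : 0 ≤ p) (hq : 0 ≤ q) :
    ∃ τ : ℝ, (1 - τ) ^ 2 * q / t + τ ^ 2 * p / (1 - t) = weightedHarmonicMean t p q := by
  have ht0 : t ≠ 0 := ht.1.ne'
  have h1t : 1 - t ≠ 0 := (sub_pos.2 ht.2).ne'
  unfold weightedHarmonicMean
  by_cases hD : t * p + (1 - t) * q = 0
  · obtain ⟨rfl, rfl⟩ := eq_zero_of_convex_comb_eq_zero ht hp hq hD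
    exact ⟨0, by simp⟩
  · refine ⟨(1 - t) * q / (t * p + (1 - t) * q), ?_⟩
    field_simp
    ring

lemma mul_sub_div_eq_sub_weightedHarmonicMean_div {t p q : ℝ} (ht : t ∈ Ioo 0 1) (hp : 0 ≤ p)
    (hq : 0 ≤ q) :
    p * (p - q) / (t * p + (1 - t) * q) = (p - weightedHarmonicMean t p q) / t := by
  have ht0 : t ≠ 0 := ht.1.ne'
  unfold weightedHarmonicMean
  by_cases hD : t * p + (1 - t) * q = 0
  · obtain ⟨rfl, rfl⟩ := eq_zero_of_convex_comb_eq_zero ht hp hq hD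
    simp
  · rw [sub_div' hD, div_div, div_eq_div_iff hD (mul_ne_zero hD ht0)]
    ring

lemma intervalIntegrable_mul_sub_div {p q : ℝ} (hp : 0 ≤ p) (hq : 0 ≤ q)
    (hpq : q = 0 → p = 0) :
    IntervalIntegrable (fun t => p * (p - q) / (t * p + (1 - t) * q)) MeasureTheory.volume 0 1 := by
  rcases hp.eq_or_lt with rfl | hp
  · simp
  have hq : 0 < q := hq.lt_of_ne fun h => hp.ne' (hpq h.symm)
  refine ContinuousOn.intervalIntegrable (continuousOn_const.div (by fun_prop) fun t ht => ?_)
  rw [uIcc_of_le zero_le_one] at ht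
  exact (convex_comb_pos ht hp hq).ne'

lemma integral_mul_sub_div_eq_mul_log_div {p q : ℝ} (hp : 0 ≤ p) (hq : 0 ≤ q)
    (hpq : q = 0 → p = 0) :
    ∫ t in (0 : ℝ)..1, p * (p - q) / (t * p + (1 - t) * q) = p * Real.log (p / q) := by
  rcases hp.eq_or_lt with rfl | hp
  · simp
  have hq : 0 < q := hq.lt_of_ne fun h => hp.ne' (hpq h.symm)
  have hderiv : ∀ t ∈ uIcc (0 : ℝ) 1, HasDerivAt (fun t => p * Real.log (t * p + (1 - t) * q))
      (p * (p - q) / (t * p + (1 - t) * q)) t := by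
    intro t ht
    rw [uIcc_of_le zero_le_one] at ht
    have hlin : HasDerivAt (fun t => t * p + (1 - t) * q) (p - q) t :=
      (((hasDerivAt_id' t).mul_const p).add
        (((hasDerivAt_id' t).const_sub 1).mul_const q)).congr_deriv (by ring)
    exact ((hlin.log (convex_comb_pos ht hp hq).ne').const_mul p).congr_deriv
      (mul_div_assoc _ _ _).symm
  rw [intervalIntegral.integral_eq_sub_of_hasDerivAt hderiv
    (intervalIntegrable_mul_sub_div hp.le hq.le fun h => absurd h hq.ne'),
    Real.log_div hp.ne' hq.ne']
  simp
  ring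

lemma mul_log_div_mul_eq {a b w : ℝ} (h : b * w = 0 → a * w = 0) :
    a * w * Real.log (a * w / (b * w)) = a * Real.log a * w - a * Real.log b * w := by
  rcases eq_or_ne w 0 with rfl | hw
  · simp
  rcases eq_or_ne a 0 with rfl | ha
  · simp
  have hb : b ≠ 0 := fun hb => mul_ne_zero ha hw (h (by rw [hb, zero_mul]))
  rw [mul_div_mul_right _ _ hw, Real.log_div ha hb]
  ring

variable {α β : Type*} [Fintype α] [Fintype β]

lemma sum_mul_log_div_eq_integral {p q : α → ℝ} (hp : 0 ≤ p) (hq : 0 ≤ q)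
    (hpq : ∀ x, q x = 0 → p x = 0) :
    ∑ x, p x * Real.log (p x / q x) =
      ∫ t in (0 : ℝ)..1, ∑ x, p x * (p x - q x) / (t * p x + (1 - t) * q x) := by
  rw [intervalIntegral.integral_finsetSum fun x _ =>
    intervalIntegrable_mul_sub_div (hp x) (hq x) (hpq x)]
  exact Finset.sum_congr rfl fun x _ =>
    (integral_mul_sub_div_eq_mul_log_div (hp x) (hq x) (hpq x)).symm

theorem sum_mul_log_div_le_of_weightedHarmonicMean_le {p q : α → ℝ} {P Q : β → ℝ}
    (hp : 0 ≤ p) (hq : 0 ≤ q) (hpq : ∀ x, q x = 0 → p x = 0)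
    (hP : 0 ≤ P) (hQ : 0 ≤ Q) (hPQ : ∀ y, Q y = 0 → P y = 0) (hsum : ∑ x, p x = ∑ y, P y)
    (hmean : ∀ t ∈ Ioo (0 : ℝ) 1,
      ∑ y, weightedHarmonicMean t (P y) (Q y) ≤ ∑ x, weightedHarmonicMean t (p x) (q x)) :
    ∑ x, p x * Real.log (p x / q x) ≤ ∑ y, P y * Real.log (P y / Q y) := by
  rw [sum_mul_log_div_eq_integral hp hq hpq, sum_mul_log_div_eq_integral hP hQ hPQ]
  refine intervalIntegral.integral_mono_on_of_le_Ioo zero_le_one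
    (by simpa only [Finset.sum_fn] using IntervalIntegrable.sum Finset.univ fun x _ =>
      intervalIntegrable_mul_sub_div (hp x) (hq x) (hpq x))
    (by simpa only [Finset.sum_fn] using IntervalIntegrable.sum Finset.univ fun y _ =>
      intervalIntegrable_mul_sub_div (hP y) (hQ y) (hPQ y)) fun t ht => ?_
  simp only [mul_sub_div_eq_sub_weightedHarmonicMean_div ht (hp _) (hq _),
    mul_sub_div_eq_sub_weightedHarmonicMean_div ht (hP _) (hQ _), ← Finset.sum_div,
    Finset.sum_sub_distrib, hsum]
  gcongr
  exacts [ht.1.le, hmean t ht]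

end Classical

open Matrix Unitary

namespace Matrix.PosSemidef

open scoped MatrixOrder

variable {n : Type*} [Fintype n] [DecidableEq n] {A B : Matrix n n ℂ}

lemma trace_mul_eq_trace_conjTranspose_mul_self (hA : A.PosSemidef) (hB : B.PosSemidef) :
    (A * B).trace = ((CFC.sqrt A * CFC.sqrt B)ᴴ * (CFC.sqrt A * CFC.sqrt B)).trace := by
  have hSA := (CFC.sqrt_nonneg A).posSemidef.isHermitian
  have hSB := (CFC.sqrt_nonneg B).posSemidef.isHermitian
  conv_lhs => rw [← CFC.sqrt_mul_sqrt_self A hA.nonneg, ← CFC.sqrt_mul_sqrt_self B hB.nonneg]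
  rw [conjTranspose_mul, hSA.eq, hSB.eq, ← Matrix.mul_assoc, trace_mul_comm]
  simp only [Matrix.mul_assoc]

lemma trace_mul_nonneg_s10 (hA : A.PosSemidef) (hB : B.PosSemidef) : 0 ≤ (A * B).trace := by
  rw [trace_mul_eq_trace_conjTranspose_mul_self hA hB]
  exact (posSemidef_conjTranspose_mul_self _).trace_nonneg

lemma re_trace_mul_nonneg (hA : A.PosSemidef) (hB : B.PosSemidef) : 0 ≤ (A * B).trace.re :=
  (Complex.nonneg_iff.1 (trace_mul_nonneg_s10 hA hB)).1

lemma mul_eq_zero_of_trace_mul_eq_zero (hA : A.PosSemidef) (hB : B.PosSemidef)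
    (h : (A * B).trace = 0) : A * B = 0 := by
  rw [trace_mul_eq_trace_conjTranspose_mul_self hA hB,
    trace_conjTranspose_mul_self_eq_zero_iff] at h
  rw [← CFC.sqrt_mul_sqrt_self A hA.nonneg, ← CFC.sqrt_mul_sqrt_self B hB.nonneg,
    show CFC.sqrt A * CFC.sqrt A * (CFC.sqrt B * CFC.sqrt B) =
      CFC.sqrt A * (CFC.sqrt A * CFC.sqrt B) * CFC.sqrt B by simp only [Matrix.mul_assoc],
    h, Matrix.mul_zero, Matrix.zero_mul]

end Matrix.PosSemidef

variable {κ : Type*} [Fintype κ]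

lemma posSemidef_sum_sq_smul_sub_mul_self {E : κ → Matrix ι ι ℂ} (hE : ∀ x, (E x).PosSemidef)
    (hsum : ∑ x, E x = 1) (τ : κ → ℝ) :
    (∑ x, τ x ^ 2 • E x - (∑ x, τ x • E x) * ∑ x, τ x • E x).PosSemidef := by
  set Y := ∑ x, τ x • E x
  have hvar : ∑ x, (τ x • 1 - Y)ᴴ * E x * (τ x • 1 - Y) = ∑ x, τ x ^ 2 • E x - Y * Y := by
    have hexpand : ∀ x, (τ x • 1 - Y)ᴴ * E x * (τ x • 1 - Y) =
        τ x ^ 2 • E x - τ x • (E x * Y) - τ x • (Yᴴ * E x) + Yᴴ * E x * Y := by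
      intro x
      simp only [conjTranspose_sub, conjTranspose_smul, conjTranspose_one, star_trivial,
        sub_mul, mul_sub, smul_mul_assoc, mul_smul_comm, one_mul, mul_one, smul_sub, smul_smul]
      module
    have hEY : ∑ x, τ x • (E x * Y) = Y * Y := by
      simp only [← smul_mul_assoc, ← Finset.sum_mul, Y]
    have hYE : ∑ x, τ x • (Yᴴ * E x) = Yᴴ * Y := by
      simp only [← mul_smul_comm, ← Finset.mul_sum, Y]
    have hYEY : ∑ x, Yᴴ * E x * Y = Yᴴ * Y := by
      rw [← Finset.sum_mul, ← Finset.mul_sum, hsum, mul_one]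
    rw [Finset.sum_congr rfl fun x _ => hexpand x, Finset.sum_add_distrib,
      Finset.sum_sub_distrib, Finset.sum_sub_distrib, hEY, hYE, hYEY]
    abel
  rw [← hvar]
  exact Finset.sum_induction _ _ (fun _ _ => PosSemidef.add) PosSemidef.zero
    fun x _ => (hE x).conjTranspose_mul_mul_same _

lemma re_trace_mul_mul_conjTranspose_le {A : Matrix ι ι ℂ} (hA : A.PosSemidef)
    {E : κ → Matrix ι ι ℂ} (hE : ∀ x, (E x).PosSemidef) (hsum : ∑ x, E x = 1) (τ : κ → ℝ) :
    ((∑ x, τ x • E x) * A * (∑ x, τ x • E x)ᴴ).trace.re ≤ ∑ x, τ x ^ 2 * (A * E x).trace.re := by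
  have hY : (∑ x, τ x • E x)ᴴ = ∑ x, τ x • E x := by
    simp only [conjTranspose_sum, conjTranspose_smul, star_trivial, (hE _).isHermitian.eq]
  have hvar := hA.re_trace_mul_nonneg (posSemidef_sum_sq_smul_sub_mul_self hE hsum τ)
  rw [Matrix.mul_sub, trace_sub, Finset.mul_sum, trace_sum, Complex.sub_re, Complex.re_sum] at hvar
  simp only [mul_smul_comm, trace_smul, Complex.smul_re, smul_eq_mul] at hvar
  rw [hY, Matrix.mul_assoc, trace_mul_comm, Matrix.mul_assoc]
  linarith

lemma sum_re_trace_mul_eq {A : Matrix ι ι ℂ} {E : κ → Matrix ι ι ℂ} (hsum : ∑ x, E x = 1) :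
    ∑ x, (A * E x).trace.re = A.trace.re := by
  rw [← Complex.re_sum, ← trace_sum, ← Finset.mul_sum, hsum, Matrix.mul_one]

omit [DecidableEq ι] in
lemma SuppLE.mul_eq_zero {ρ σ M : Matrix ι ι ℂ} (hsupp : SuppLE ρ σ) (h : σ * M = 0) :
    ρ * M = 0 := by
  ext i j
  exact congrFun (hsupp (fun k => M k j) (funext fun i => congrFun₂ h i j)) i

lemma SuppLE.re_trace_mul_eq_zero {ρ σ E : Matrix ι ι ℂ} (hsupp : SuppLE ρ σ)
    (hσ : σ.PosSemidef) (hE : E.PosSemidef) (h : (σ * E).trace.re = 0) :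
    (ρ * E).trace.re = 0 := by
  have h0 : (σ * E).trace = 0 :=
    Complex.ext h (Complex.nonneg_iff.1 (hσ.trace_mul_nonneg_s10 hE)).2.symm
  rw [hsupp.mul_eq_zero (hσ.mul_eq_zero_of_trace_mul_eq_zero hE h0), trace_zero, Complex.zero_re]

lemma trace_diagonal_mul_mul_diagonal_mul_conjTranspose (f g : ι → ℝ) (W : Matrix ι ι ℂ) :
    (diagonal (RCLike.ofReal ∘ f) * W * diagonal (RCLike.ofReal ∘ g) * Wᴴ).trace =
      ((∑ i, ∑ j, f i * g j * Complex.normSq (W i j) : ℝ) : ℂ) := by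
  push_cast
  refine Finset.sum_congr rfl fun i _ => ?_
  rw [diag_apply, Matrix.mul_apply]
  refine Finset.sum_congr rfl fun j _ => ?_
  simp only [diagonal_mul, mul_diagonal, conjTranspose_apply, Function.comp_apply,
    Complex.star_def, Complex.normSq_eq_conj_mul_self, Complex.coe_algebraMap]
  ring

namespace Matrix.IsHermitian

variable {A B : Matrix ι ι ℂ} (hA : A.IsHermitian) (hB : B.IsHermitian)

lemma cfc_id : hA.cfc id = A := hA.spectral_theorem.symm

lemma cfc_one : hA.cfc (fun _ => 1) = 1 := by
  simp [IsHermitian.cfc, Function.comp_def]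

lemma cfc_mul_cfc (f g : ℝ → ℝ) : hA.cfc f * hA.cfc g = hA.cfc (f * g) := by
  simp only [IsHermitian.cfc, ← map_mul, diagonal_mul_diagonal]
  congr 2
  ext i
  simp

lemma trace_cfc_mul_mul_cfc_mul_conjTranspose (f g : ℝ → ℝ) (X : Matrix ι ι ℂ) :
    (hA.cfc f * X * hB.cfc g * Xᴴ).trace =
      ((∑ i, ∑ j, f (hA.eigenvalues i) * g (hB.eigenvalues j) *
        Complex.normSq ((star (hA.eigenvectorUnitary : Matrix ι ι ℂ) * X *
          hB.eigenvectorUnitary) i j) : ℝ) : ℂ) := by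
  have h := trace_diagonal_mul_mul_diagonal_mul_conjTranspose (f ∘ hA.eigenvalues)
    (g ∘ hB.eigenvalues) (star (hA.eigenvectorUnitary : Matrix ι ι ℂ) * X * hB.eigenvectorUnitary)
  simp only [Function.comp_apply] at h
  rw [← h, IsHermitian.cfc, IsHermitian.cfc, conjStarAlgAut_apply, conjStarAlgAut_apply,
    conjTranspose_mul, conjTranspose_mul, star_eq_conjTranspose, conjTranspose_conjTranspose]
  simp only [Matrix.mul_assoc]
  rw [trace_mul_comm]
  simp only [Matrix.mul_assoc, star_eq_conjTranspose]

end Matrix.IsHermitian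

lemma mlog_eq_cfc {A : Matrix ι ι ℂ} (hA : A.IsHermitian) : mlog A = hA.cfc Real.log := by
  rw [mlog, dif_pos hA]

section NussbaumSzkola

variable {ρ σ : Matrix ι ι ℂ} (hρ : ρ.IsHermitian) (hσ : σ.IsHermitian)

def eigenOverlap (i j : ι) : ℝ :=
  Complex.normSq ((star (hρ.eigenvectorUnitary : Matrix ι ι ℂ) * hσ.eigenvectorUnitary) i j)

def nussbaumSzkolaFst (z : ι × ι) : ℝ := hρ.eigenvalues z.1 * eigenOverlap hρ hσ z.1 z.2

def nussbaumSzkolaSnd (z : ι × ι) : ℝ := hσ.eigenvalues z.2 * eigenOverlap hρ hσ z.1 z.2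

lemma re_trace_cfc_mul_cfc (f g : ℝ → ℝ) :
    (hρ.cfc f * hσ.cfc g).trace.re =
      ∑ i, ∑ j, f (hρ.eigenvalues i) * g (hσ.eigenvalues j) * eigenOverlap hρ hσ i j := by
  simpa [eigenOverlap] using
    congrArg Complex.re (hρ.trace_cfc_mul_mul_cfc_mul_conjTranspose hσ f g 1)

lemma re_trace_eq_sum_nussbaumSzkolaFst : ρ.trace.re = ∑ z, nussbaumSzkolaFst hρ hσ z := by
  have h := re_trace_cfc_mul_cfc hρ hσ id (fun _ => 1)
  rw [hρ.cfc_id, hσ.cfc_one, Matrix.mul_one] at h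
  simp [h, nussbaumSzkolaFst, Fintype.sum_prod_type]

lemma sum_weightedHarmonicMean_nussbaumSzkola (t : ℝ) :
    ∑ z, weightedHarmonicMean t (nussbaumSzkolaFst hρ hσ z) (nussbaumSzkolaSnd hρ hσ z) =
      ∑ i, ∑ j, eigenOverlap hρ hσ i j *
        weightedHarmonicMean t (hρ.eigenvalues i) (hσ.eigenvalues j) := by
  simp only [Fintype.sum_prod_type, nussbaumSzkolaFst, nussbaumSzkolaSnd,
    weightedHarmonicMean_mul_mul]

end NussbaumSzkola

lemma nussbaumSzkolaFst_eq_zero {ρ σ : Matrix ι ι ℂ} (hρ : ρ.PosSemidef) (hσ : σ.IsHermitian)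
    (hsupp : SuppLE ρ σ) {z : ι × ι} (hz : nussbaumSzkolaSnd hρ.1 hσ z = 0) :
    nussbaumSzkolaFst hρ.1 hσ z = 0 := by
  -- `ρ` kills the projection onto `ker σ`, so `∑ a i [b j = 0] |⟪u i, v j⟫|² = 0` termwise.
  let kernelProj : ℝ → ℝ := fun x => if x = 0 then 1 else 0
  have hσK : σ * hσ.cfc kernelProj = 0 := by
    have hK : id * kernelProj = 0 := by
      ext x
      by_cases hx : x = 0 <;> simp [kernelProj, hx]
    calc σ * hσ.cfc kernelProj = hσ.cfc (id * kernelProj) := by rw [← hσ.cfc_mul_cfc, hσ.cfc_id]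
      _ = 0 := by simp [hK, IsHermitian.cfc, Function.comp_def]
  have htr := re_trace_cfc_mul_cfc hρ.1 hσ id kernelProj
  rw [hρ.1.cfc_id, hsupp.mul_eq_zero hσK, trace_zero, Complex.zero_re, eq_comm] at htr
  have hterm : ∀ i j, 0 ≤ id (hρ.1.eigenvalues i) * kernelProj (hσ.eigenvalues j) *
      eigenOverlap hρ.1 hσ i j := fun i j =>
    mul_nonneg (mul_nonneg (hρ.eigenvalues_nonneg i) (by unfold kernelProj; positivity))
      (Complex.normSq_nonneg _)
  have hrow := (Finset.sum_eq_zero_iff_of_nonneg fun i _ => Finset.sum_nonneg fun j _ =>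
    hterm i j).1 htr z.1 (Finset.mem_univ _)
  have hzero := (Finset.sum_eq_zero_iff_of_nonneg fun j _ => hterm z.1 j).1 hrow z.2
    (Finset.mem_univ _)
  unfold nussbaumSzkolaSnd at hz
  unfold nussbaumSzkolaFst
  rcases mul_eq_zero.1 hz with hb | hw
  · simpa [kernelProj, hb] using hzero
  · simp [hw]

lemma re_trace_mul_sub_mlog_eq {ρ σ : Matrix ι ι ℂ} (hρ : ρ.PosSemidef) (hσ : σ.IsHermitian)
    (hsupp : SuppLE ρ σ) :
    (ρ * (mlog ρ - mlog σ)).trace.re = ∑ z, nussbaumSzkolaFst hρ.1 hσ z *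
      Real.log (nussbaumSzkolaFst hρ.1 hσ z / nussbaumSzkolaSnd hρ.1 hσ z) := by
  have hlogρ := re_trace_cfc_mul_cfc hρ.1 hσ (id * Real.log) (fun _ => 1)
  rw [← hρ.1.cfc_mul_cfc, hρ.1.cfc_id, hσ.cfc_one, Matrix.mul_one, ← mlog_eq_cfc] at hlogρ
  have hlogσ := re_trace_cfc_mul_cfc hρ.1 hσ id Real.log
  rw [hρ.1.cfc_id, ← mlog_eq_cfc] at hlogσ
  rw [Matrix.mul_sub, trace_sub, Complex.sub_re, hlogρ, hlogσ, Fintype.sum_prod_type,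
    ← Finset.sum_sub_distrib]
  refine Finset.sum_congr rfl fun i _ => ?_
  rw [← Finset.sum_sub_distrib]
  refine Finset.sum_congr rfl fun j _ => ?_
  rw [nussbaumSzkolaFst, nussbaumSzkolaSnd,
    mul_log_div_mul_eq (nussbaumSzkolaFst_eq_zero hρ hσ hsupp (z := (i, j)))]
  simp

lemma sum_eigenOverlap_mul_weightedHarmonicMean_le_re_trace {ρ σ : Matrix ι ι ℂ}
    (hρ : ρ.PosSemidef) (hσ : σ.PosSemidef) {t : ℝ} (ht : t ∈ Set.Ioo 0 1) (X : Matrix ι ι ℂ) :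
    ∑ i, ∑ j, eigenOverlap hρ.1 hσ.1 i j *
        weightedHarmonicMean t (hρ.1.eigenvalues i) (hσ.1.eigenvalues j) ≤
      1 / t * ((1 - X) * σ * (1 - X)ᴴ).trace.re + 1 / (1 - t) * (ρ * X * Xᴴ).trace.re := by
  have hσX := congrArg Complex.re
    (hρ.1.trace_cfc_mul_mul_cfc_mul_conjTranspose hσ.1 (fun _ => 1) id (1 - X))
  rw [hρ.1.cfc_one, hσ.1.cfc_id, Matrix.one_mul, Complex.ofReal_re] at hσX
  have hρX := congrArg Complex.re
    (hρ.1.trace_cfc_mul_mul_cfc_mul_conjTranspose hσ.1 id (fun _ => 1) X)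
  rw [hρ.1.cfc_id, hσ.1.cfc_one, Matrix.mul_one, Complex.ofReal_re] at hρX
  rw [hσX, hρX]
  simp only [Finset.mul_sum, ← Finset.sum_add_distrib]
  refine Finset.sum_le_sum fun i _ => Finset.sum_le_sum fun j _ => ?_
  simp only [eigenOverlap, id, one_mul, mul_one]
  set U : Matrix ι ι ℂ := (hρ.1.eigenvectorUnitary : Matrix ι ι ℂ)
  set V : Matrix ι ι ℂ := (hσ.1.eigenvectorUnitary : Matrix ι ι ℂ)
  have hsplit : (star U * V) i j - (star U * X * V) i j = (star U * (1 - X) * V) i j := by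
    simp [Matrix.mul_sub, Matrix.sub_mul]
  have h := weightedHarmonicMean_mul_normSq_le ht (hρ.eigenvalues_nonneg i)
    (hσ.eigenvalues_nonneg j) ((star U * V) i j) ((star U * X * V) i j)
  rw [hsplit] at h
  rw [mul_comm]
  exact h.trans_eq (by ring)

lemma sum_eigenOverlap_mul_weightedHarmonicMean_le_povm {ρ σ : Matrix ι ι ℂ}
    (hρ : ρ.PosSemidef) (hσ : σ.PosSemidef) {E : κ → Matrix ι ι ℂ}
    (hE : ∀ x, (E x).PosSemidef) (hsum : ∑ x, E x = 1) {t : ℝ} (ht : t ∈ Set.Ioo 0 1) :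
    ∑ i, ∑ j, eigenOverlap hρ.1 hσ.1 i j *
        weightedHarmonicMean t (hρ.1.eigenvalues i) (hσ.1.eigenvalues j) ≤
      ∑ x, weightedHarmonicMean t (ρ * E x).trace.re (σ * E x).trace.re := by
  choose τ hτ using fun x => exists_sq_mul_div_add_sq_mul_div_eq_weightedHarmonicMean ht
    (hρ.re_trace_mul_nonneg (hE x)) (hσ.re_trace_mul_nonneg (hE x))
  set Y := ∑ x, τ x • E x
  have hY : Yᴴ = Y := by
    simp only [Y, conjTranspose_sum, conjTranspose_smul, star_trivial, (hE _).isHermitian.eq]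
  have hρY : (ρ * Y * Yᴴ).trace = (Y * ρ * Yᴴ).trace := by
    rw [hY, trace_mul_comm, Matrix.mul_assoc]
  have h1Y : 1 - Y = ∑ x, (1 - τ x) • E x := by
    simp only [Y, sub_smul, one_smul, Finset.sum_sub_distrib, hsum]
  calc _ ≤ 1 / t * ((1 - Y) * σ * (1 - Y)ᴴ).trace.re + 1 / (1 - t) * (ρ * Y * Yᴴ).trace.re :=
        sum_eigenOverlap_mul_weightedHarmonicMean_le_re_trace hρ hσ ht Y
    _ ≤ 1 / t * ∑ x, (1 - τ x) ^ 2 * (σ * E x).trace.re +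
          1 / (1 - t) * ∑ x, τ x ^ 2 * (ρ * E x).trace.re := by
        have ht1 : 0 < 1 - t := sub_pos.2 ht.2
        rw [hρY, h1Y]
        gcongr
        · exact one_div_nonneg.2 ht.1.le
        · exact re_trace_mul_mul_conjTranspose_le hσ hE hsum _
        · exact re_trace_mul_mul_conjTranspose_le hρ hE hsum τ
    _ = _ := by
        rw [Finset.mul_sum, Finset.mul_sum, ← Finset.sum_add_distrib]
        refine Finset.sum_congr rfl fun x _ => ?_
        rw [← hτ x]
        ring

/-- The measured relative entropy never exceeds the Umegaki relative
entropy: for every POVM `(E_x)` (hence for the supremum over any class of POVMs),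
`Σ_x Tr(ρE_x) log(Tr(ρE_x)/Tr(σE_x)) ≤ D(ρ‖σ)`. -/
theorem measured_le_relEnt (ρ σ : Matrix ι ι ℂ)
    (hρ : IsDensity ρ) (hσ : IsDensity σ)
    (k : ℕ) (E : Fin k → Matrix ι ι ℂ)
    (hpos : ∀ x, (E x).PosSemidef) (hsum : ∑ x, E x = 1) :
    ((measValue E ρ σ : ℝ) : EReal) ≤ relEnt ρ σ := by
  obtain ⟨hρ, -⟩ := hρ
  obtain ⟨hσ, -⟩ := hσ
  rw [relEnt]
  split_ifs with hsupp
  · rw [EReal.coe_le_coe_iff, re_trace_mul_sub_mlog_eq hρ hσ.1 hsupp]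
    refine sum_mul_log_div_le_of_weightedHarmonicMean_le
      (fun x => hρ.re_trace_mul_nonneg (hpos x)) (fun x => hσ.re_trace_mul_nonneg (hpos x))
      (fun x => hsupp.re_trace_mul_eq_zero hσ (hpos x))
      (fun z => mul_nonneg (hρ.eigenvalues_nonneg _) (Complex.normSq_nonneg _))
      (fun z => mul_nonneg (hσ.eigenvalues_nonneg _) (Complex.normSq_nonneg _))
      (fun z => nussbaumSzkolaFst_eq_zero hρ hσ.1 hsupp) ?_ fun t ht => ?_
    · rw [sum_re_trace_mul_eq hsum, re_trace_eq_sum_nussbaumSzkolaFst hρ.1 hσ.1]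
    · rw [sum_weightedHarmonicMean_nussbaumSzkola]
      exact sum_eigenOverlap_mul_weightedHarmonicMean_le_povm hρ hσ hpos hsum ht
  · exact le_top
end
end

section
/- For the resource theory of coherence, the relative entropy of coherence has the closed form D_I(ρ) := min_{σ∈I} D(ρ‖σ) = D(ρ‖Δ(ρ)) = S(Δ(ρ)) − S(ρ), where Δ is the completely dephasing channel in the fixed basis and I is the set of states diagonal in that basis. -/
open scoped BigOperators ComplexOrder
noncomputable section

variable {ι : Type*} [Fintype ι] [DecidableEq ι]

/-- The completely dephasing channel in the fixed (standard) basis. -/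
def deph (ρ : Matrix ι ι ℂ) : Matrix ι ι ℂ := Matrix.diagonal (fun i => ρ i i)

/-- The set of incoherent (diagonal) states. -/
def incoherent : Set (Matrix ι ι ℂ) := {σ | IsDensity σ ∧ σ = deph σ}

/-- The von Neumann entropy `S(ρ) = -Tr ρ log ρ`. -/
def vnEnt (ρ : Matrix ι ι ℂ) : ℝ := -((ρ * mlog ρ).trace.re)

/-! Every incoherent `σ`, and `Δ(ρ)` in particular, is a diagonal matrix with real entries `q`,
so `log σ` is the diagonal matrix of the `log qᵢ` and `Tr ρ log σ = ∑ pᵢ log qᵢ` sees only the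
diagonal `p` of `ρ`: `D(ρ‖σ) = -S(ρ) - ∑ pᵢ log qᵢ`. Gibbs' inequality `∑ pᵢ log qᵢ ≤ ∑ pᵢ log pᵢ`
makes `q = p`, i.e. `σ = Δ(ρ)`, the minimiser, with value `S(Δ(ρ)) - S(ρ)`. The support condition
for `Δ(ρ)` holds since a zero diagonal entry of a positive semidefinite matrix kills its column. -/

open Matrix Finset

lemma Real.mul_log_sub_mul_log_le {p q : ℝ} (hp : 0 ≤ p) (hq : 0 ≤ q) (hpq : q = 0 → p = 0) :
    p * Real.log q - p * Real.log p ≤ q - p := by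
  rcases hp.eq_or_lt with rfl | hp
  · simpa using hq
  have hq : 0 < q := hq.lt_of_ne fun h => hp.ne' (hpq h.symm)
  calc p * Real.log q - p * Real.log p = p * Real.log (q / p) := by
        rw [Real.log_div hq.ne' hp.ne']; ring
    _ ≤ p * (q / p - 1) :=
        mul_le_mul_of_nonneg_left (Real.log_le_sub_one_of_pos (by positivity)) hp.le
    _ = q - p := by field_simp

lemma Real.sum_mul_log_le_sum_mul_log {α : Type*} (s : Finset α) {p q : α → ℝ}
    (hp : ∀ i ∈ s, 0 ≤ p i) (hq : ∀ i ∈ s, 0 ≤ q i) (hpq : ∀ i ∈ s, q i = 0 → p i = 0)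
    (hsum : ∑ i ∈ s, q i ≤ ∑ i ∈ s, p i) :
    ∑ i ∈ s, p i * Real.log (q i) ≤ ∑ i ∈ s, p i * Real.log (p i) := by
  have h := sum_le_sum fun i hi => Real.mul_log_sub_mul_log_le (hp i hi) (hq i hi) (hpq i hi)
  rw [sum_sub_distrib, sum_sub_distrib] at h
  linarith

lemma isHermitian_diagonal_ofReal {n : Type*} [DecidableEq n] (d : n → ℝ) :
    (diagonal fun i => (d i : ℂ)).IsHermitian :=
  isHermitian_diagonal_iff.mpr fun i => by simp [IsSelfAdjoint]

lemma cfc_diagonal_ofReal (f : ℝ → ℝ) (d : ι → ℝ) :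
    cfc f (diagonal fun i => (d i : ℂ)) = diagonal fun i => (f (d i) : ℂ) := by
  -- on the finite spectrum, `f` agrees with an interpolating polynomial
  set P := Lagrange.interpolate (univ.image d) id f
  have hP : ∀ i, P.eval (d i) = f (d i) := fun i =>
    Lagrange.eval_interpolate_at_node _ (Set.injOn_id _) (mem_image_of_mem d (mem_univ i))
  have hspec : (spectrum ℝ (diagonal fun i => (d i : ℂ))).EqOn f P.eval := by
    intro x hx
    obtain ⟨i, hi⟩ : (x : ℂ) ∈ Set.range fun i => (d i : ℂ) := by
      rw [← spectrum_diagonal]; exact spectrum.algebraMap_mem ℂ hx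
    obtain rfl : d i = x := Complex.ofReal_injective hi
    exact (hP i).symm
  have hdiag : (diagonal fun i => (d i : ℂ)) =
      ((diagonalAlgHom ℝ).comp (Complex.ofRealAm.compLeft ι)) d := rfl
  rw [cfc_congr hspec, cfc_polynomial P _ (isHermitian_diagonal_ofReal d).isSelfAdjoint, hdiag,
    Polynomial.aeval_algHom_apply, Polynomial.aeval_pi_apply]
  simp [hP]

lemma mlog_diagonal_ofReal (d : ι → ℝ) :
    mlog (diagonal fun i => (d i : ℂ)) = diagonal fun i => (Real.log (d i) : ℂ) := by
  have hA := isHermitian_diagonal_ofReal d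
  rw [mlog, dif_pos hA, ← hA.cfc_eq, cfc_diagonal_ofReal]

lemma re_trace_mul_diagonal_ofReal (A : Matrix ι ι ℂ) (c : ι → ℝ) :
    (A * diagonal fun i => (c i : ℂ)).trace.re = ∑ i, (A i i).re * c i := by
  simp [trace, Complex.re_sum]

lemma vnEnt_diagonal_ofReal (p : ι → ℝ) :
    vnEnt (diagonal fun i => (p i : ℂ)) = -∑ i, p i * Real.log (p i) := by
  simp [vnEnt, mlog_diagonal_ofReal]

lemma relEnt_diagonal_ofReal (ρ : Matrix ι ι ℂ) (q : ι → ℝ)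
    (hsupp : SuppLE ρ (diagonal fun i => (q i : ℂ))) :
    relEnt ρ (diagonal fun i => (q i : ℂ)) =
      ((-vnEnt ρ - ∑ i, (ρ i i).re * Real.log (q i) : ℝ) : EReal) := by
  rw [relEnt, if_pos hsupp, mul_sub, trace_sub, Complex.sub_re, mlog_diagonal_ofReal,
    re_trace_mul_diagonal_ofReal, vnEnt, neg_neg]

lemma deph_eq_diagonal_re {n : Type*} [DecidableEq n] {ρ : Matrix n n ℂ} (hρ : ρ.IsHermitian) :
    deph ρ = diagonal fun i => ((ρ i i).re : ℂ) :=
  congrArg diagonal (funext fun i => (hρ.coe_re_apply_self i).symm)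

lemma Matrix.PosSemidef.mulVec_single_eq_zero {𝕜 n : Type*} [RCLike 𝕜] [Fintype n]
    [DecidableEq n] {A : Matrix n n 𝕜} (hA : A.PosSemidef) {i : n} (hi : A i i = 0) (x : 𝕜) :
    A *ᵥ Pi.single i x = 0 :=
  (hA.dotProduct_mulVec_zero_iff _).mp (by simp [hi])

lemma suppLE_deph {ρ : Matrix ι ι ℂ} (hρ : ρ.PosSemidef) : SuppLE ρ (deph ρ) := by
  intro v hv
  have hterm : ∀ i, ρ *ᵥ Pi.single i (v i) = 0 := fun i => by
    rcases (by simpa [deph, mulVec_diagonal] using congrFun hv i : ρ i i = 0 ∨ v i = 0) with h | h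
    · exact hρ.mulVec_single_eq_zero h _
    · rw [h, Pi.single_zero, mulVec_zero]
  rw [← univ_sum_single v, mulVec_sum]
  exact sum_eq_zero fun i _ => hterm i

lemma SuppLE.apply_self_eq_zero {ρ : Matrix ι ι ℂ} {c : ι → ℂ} (h : SuppLE ρ (diagonal c))
    {i : ι} (hi : c i = 0) : ρ i i = 0 := by
  simpa using congrFun (h (Pi.single i 1) (by simp [hi])) i

lemma deph_mem_incoherent {ρ : Matrix ι ι ℂ} (hρ : IsDensity ρ) : deph ρ ∈ incoherent := by
  refine ⟨⟨PosSemidef.diagonal fun i => hρ.1.diag_nonneg, ?_⟩, ?_⟩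
  · rw [deph, trace_diagonal, ← hρ.2]
    rfl
  · simp [deph]

lemma relEnt_deph {ρ : Matrix ι ι ℂ} (hρ : ρ.PosSemidef) :
    relEnt ρ (deph ρ) = ((vnEnt (deph ρ) - vnEnt ρ : ℝ) : EReal) := by
  have hsupp := suppLE_deph hρ
  rw [deph_eq_diagonal_re hρ.1] at hsupp ⊢
  rw [relEnt_diagonal_ofReal ρ _ hsupp, vnEnt_diagonal_ofReal]
  ring_nf

lemma IsDensity.sum_re_diag {n : Type*} [Fintype n] {ρ : Matrix n n ℂ} (hρ : IsDensity ρ) :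
    ∑ i, (ρ i i).re = 1 := by
  simpa [trace, Complex.re_sum] using congrArg Complex.re hρ.2

lemma relEnt_deph_le {ρ σ : Matrix ι ι ℂ} (hρ : IsDensity ρ) (hσ : σ ∈ incoherent) :
    relEnt ρ (deph ρ) ≤ relEnt ρ σ := by
  obtain ⟨hσρ, hσ_diag⟩ := hσ
  rw [hσ_diag, deph_eq_diagonal_re hσρ.1.1, relEnt_deph hρ.1, deph_eq_diagonal_re hρ.1.1,
    vnEnt_diagonal_ofReal]
  by_cases hsupp : SuppLE ρ (diagonal fun i => ((σ i i).re : ℂ))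
  · have hgibbs := Real.sum_mul_log_le_sum_mul_log univ (p := fun i => (ρ i i).re)
      (q := fun i => (σ i i).re) (fun i _ => (Complex.le_def.mp hρ.1.diag_nonneg).1)
      (fun i _ => (Complex.le_def.mp hσρ.1.diag_nonneg).1)
      (fun i _ hi => by simp [hsupp.apply_self_eq_zero (i := i) (by simp [hi])])
      (by rw [hρ.sum_re_diag, hσρ.sum_re_diag])
    rw [relEnt_diagonal_ofReal ρ _ hsupp, EReal.coe_le_coe_iff]
    linarith
  · rw [relEnt, if_neg hsupp]
    exact le_top

/-- The relative entropy of coherence has the closed form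
`min_{σ ∈ I} D(ρ‖σ) = D(ρ‖Δ(ρ)) = S(Δ(ρ)) - S(ρ)`. -/
theorem relEnt_coherence_closed_form (ρ : Matrix ι ι ℂ) (hρ : IsDensity ρ) :
    (⨅ σ ∈ incoherent, relEnt ρ σ) = relEnt ρ (deph ρ) ∧
    relEnt ρ (deph ρ) = ((vnEnt (deph ρ) - vnEnt ρ : ℝ) : EReal) :=
  ⟨le_antisymm (iInf₂_le _ (deph_mem_incoherent hρ)) (le_iInf₂ fun _ hσ => relEnt_deph_le hρ hσ),
    relEnt_deph hρ.1⟩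

end
end
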